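/- arXiv:2605.19828 — 9 statements merged into one kernel-verified Lean document; each statement's English description precedes it below -/
import Mathlib

section
/- Let E be a real normed vector space, C ⊆ E a nonempty compact convex set, f : E → ℝ convex on C, Δ : E → E → ℝ, and C_f ≥ 0 a constant such that Δ satisfies the curvature bound C_f for f on C. Let x* ∈ C be a minimizer of f over C. Then for every x ∈ C and every α ∈ (0,1], f(x*) ≥ f(x) + Δ x (α·(x* − x))/α − (α/2)·C_f. -/
/-- Dual bound (Remark): for convex abs-smooth `f` with abs-linearization `Δ`
satisfying the curvature bound `Cf` on `C`, and `xs` a minimizer of `f` over `C`,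
one has `f xs ≥ f x + Δ x (α • (xs - x)) / α - (α/2) * Cf` for all `x ∈ C`, `α ∈ (0,1]`. -/
theorem dual_bound
    {E : Type*} [NormedAddCommGroup E] [NormedSpace ℝ E]
    (C : Set E) (hCne : C.Nonempty) (hCcomp : IsCompact C) (hCconv : Convex ℝ C)
    (f : E → ℝ) (hf : ConvexOn ℝ C f)
    (Δ : E → E → ℝ) (Cf : ℝ) (hCf : 0 ≤ Cf)
    (hcurv : ∀ x ∈ C, ∀ v ∈ C, ∀ α ∈ Set.Ioc (0:ℝ) 1,
      |f (x + α • (v - x)) - f x - Δ x (α • (v - x))| ≤ α ^ 2 / 2 * Cf)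
    (xs : E) (hxs : xs ∈ C) (hmin : ∀ y ∈ C, f xs ≤ f y) :
    ∀ x ∈ C, ∀ α ∈ Set.Ioc (0:ℝ) 1,
      f xs ≥ f x + Δ x (α • (xs - x)) / α - α / 2 * Cf := by
  intro x hx α hα
  obtain ⟨hα0, hα1⟩ := hα
  have hcb := hcurv x hx xs hxs α ⟨hα0, hα1⟩
  have h1 : Δ x (α • (xs - x)) ≤ f (x + α • (xs - x)) - f x + α ^ 2 / 2 * Cf := by
    have := (abs_le.mp hcb).1
    linarith
  have heq : x + α • (xs - x) = (1 - α) • x + α • xs := by module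
  have hconv : f (x + α • (xs - x)) ≤ (1 - α) * f x + α * f xs := by
    rw [heq]
    exact hf.2 hx hxs (by linarith) (le_of_lt hα0) (by ring)
  have h2 : Δ x (α • (xs - x)) ≤ α * (f xs - f x) + α ^ 2 / 2 * Cf := by
    nlinarith
  have h3 : Δ x (α • (xs - x)) / α ≤ f xs - f x + α / 2 * Cf := by
    rw [div_le_iff₀ hα0]
    nlinarith
  linarith
end

section
/- Let E be a real normed vector space, C ⊆ E a nonempty compact convex set, f : E → ℝ, Δ : E → E → ℝ, and C_f ≥ 0 a constant such that Δ satisfies the curvature bound C_f for f on C. Assume that for every x ∈ C the piecewise linearization at x is convex on C. Let x* ∈ C be a minimizer of f over C, let x ∈ C, α ∈ (0,1], ε ≥ 0, and let v ∈ C be an ε-approximate model minimizer at x with step-size α. Then f(x) − f(x*) ≤ −Δ x (α·(v − x))/α + (1/2)·(1 + α·ε)·C_f. -/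
/-- Dual bound for piecewise linearization: if the piecewise linearization of `f`
at every `x ∈ C` is convex, `Δ` satisfies the curvature bound `Cf` on `C`,
`xs` is a minimizer of `f` over `C`, and `v` is an `ε`-approximate model minimizer
at `x` with step-size `α`, then
`f x - f xs ≤ -Δ x (α • (v - x)) / α + (1/2) * (1 + α * ε) * Cf`. -/
theorem dual_bound_pw_linearization
    {E : Type*} [NormedAddCommGroup E] [NormedSpace ℝ E]
    (C : Set E) (hCne : C.Nonempty) (hCcomp : IsCompact C) (hCconv : Convex ℝ C)
    (f : E → ℝ)
    (Δ : E → E → ℝ) (Cf : ℝ) (hCf : 0 ≤ Cf)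
    (hcurv : ∀ x ∈ C, ∀ v ∈ C, ∀ α ∈ Set.Ioc (0:ℝ) 1,
      |f (x + α • (v - x)) - f x - Δ x (α • (v - x))| ≤ α ^ 2 / 2 * Cf)
    (hPLconv : ∀ x ∈ C, ConvexOn ℝ C (fun y => Δ x (y - x)) ∧ Δ x 0 = 0)
    (xs : E) (hxs : xs ∈ C) (hmin : ∀ y ∈ C, f xs ≤ f y)
    (x : E) (hx : x ∈ C) (α : ℝ) (hα : α ∈ Set.Ioc (0:ℝ) 1)
    (ε : ℝ) (hε : 0 ≤ ε)
    (v : E) (hv : v ∈ C)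
    (happrox : ∀ w ∈ C,
      Δ x (α • (v - x)) ≤ Δ x (α • (w - x)) + ε * α ^ 2 / 2 * Cf) :
    f x - f xs ≤ -Δ x (α • (v - x)) / α + 1 / 2 * (1 + α * ε) * Cf := by
  obtain ⟨hα0, hα1⟩ := hα
  obtain ⟨hconv, hzero⟩ := hPLconv x hx
  -- convexity: Δ x (α • (xs - x)) ≤ α * Δ x (xs - x)
  have hcomb := hconv.2 hx hxs (show (0:ℝ) ≤ 1 - α by linarith) hα0.le (by ring)
  have heq : (1 - α) • x + α • xs = x + α • (xs - x) := by
    simp [smul_sub, sub_smul, one_smul]; abel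
  have hgx : Δ x (x - x) = 0 := by rw [sub_self]; exact hzero
  have hconvstep : Δ x (α • (xs - x)) ≤ α * Δ x (xs - x) := by
    have := hcomb
    simp only [heq, add_sub_cancel_left, hgx, smul_eq_mul, mul_zero, zero_add] at this
    exact this
  -- curvature at full step toward xs
  have hc := hcurv x hx xs hxs 1 ⟨one_pos, le_refl 1⟩
  simp only [one_smul, one_pow, add_sub_cancel] at hc
  have hT : Δ x (xs - x) ≤ f xs - f x + Cf / 2 := by
    have := abs_le.mp hc
    linarith [this.1]
  have h1 := happrox xs hxs
  set D := Δ x (α • (v - x)) with hD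
  have hkey : (f x - f xs) * α ≤ α * (1 / 2 * (1 + α * ε) * Cf) - D := by
    nlinarith [h1, hconvstep, hT]
  have : f x - f xs ≤ (α * (1 / 2 * (1 + α * ε) * Cf) - D) / α :=
    (le_div_iff₀ hα0).mpr hkey
  calc f x - f xs ≤ (α * (1 / 2 * (1 + α * ε) * Cf) - D) / α := this
    _ = -D / α + 1 / 2 * (1 + α * ε) * Cf := by field_simp; ring
end

section
/- Let E be a real normed vector space, C ⊆ E a nonempty compact convex set, f : E → ℝ convex on C, Δ : E → E → ℝ, and C_f ≥ 0 a constant such that Δ satisfies the curvature bound C_f for f on C. Let x_t ∈ C, α_t ∈ (0,1], ε ≥ 0, let w ∈ C be an exact minimizer of the map u ↦ Δ x_t (α_t·(u − x_t)) over C, set g(x_t) = −Δ x_t (α_t·(w − x_t))/α_t, and let v_t ∈ C satisfy Δ x_t (α_t·(v_t − x_t)) ≤ Δ x_t (α_t·(w − x_t)) + (ε·α_t²/2)·C_f. Then the step x_{t+1} = x_t + α_t·(v_t − x_t) satisfies f(x_{t+1}) ≤ f(x_t) − α_t·g(x_t) + (α_t²/2)·C_f·(1 + ε). -/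
/-- Primal progress: for convex abs-smooth `f` with curvature bound `Cf`, exact model
minimizer `w` defining the dual gap `g = -Δ x_t (α_t • (w - x_t)) / α_t`, and an
inexact direction `v_t`, the step `x_{t+1} = x_t + α_t • (v_t - x_t)` satisfies
`f x_{t+1} ≤ f x_t - α_t * g + (α_t² / 2) * Cf * (1 + ε)`. -/
theorem primal_progress
    {E : Type*} [NormedAddCommGroup E] [NormedSpace ℝ E]
    (C : Set E) (hCne : C.Nonempty) (hCcomp : IsCompact C) (hCconv : Convex ℝ C)
    (f : E → ℝ) (hf : ConvexOn ℝ C f)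
    (Δ : E → E → ℝ) (Cf : ℝ) (hCf : 0 ≤ Cf)
    (hcurv : ∀ x ∈ C, ∀ v ∈ C, ∀ α ∈ Set.Ioc (0:ℝ) 1,
      |f (x + α • (v - x)) - f x - Δ x (α • (v - x))| ≤ α ^ 2 / 2 * Cf)
    (xt : E) (hxt : xt ∈ C) (αt : ℝ) (hαt : αt ∈ Set.Ioc (0:ℝ) 1)
    (ε : ℝ) (hε : 0 ≤ ε)
    (w : E) (hw : w ∈ C)
    (hwmin : ∀ u ∈ C, Δ xt (αt • (w - xt)) ≤ Δ xt (αt • (u - xt)))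
    (vt : E) (hvt : vt ∈ C)
    (hv : Δ xt (αt • (vt - xt)) ≤ Δ xt (αt • (w - xt)) + ε * αt ^ 2 / 2 * Cf) :
    f (xt + αt • (vt - xt)) ≤
      f xt - αt * (-Δ xt (αt • (w - xt)) / αt) + αt ^ 2 / 2 * Cf * (1 + ε) := by
  have hc := hcurv xt hxt vt hvt αt hαt
  have habs := abs_le.mp hc
  have hα : αt ≠ 0 := ne_of_gt hαt.1
  have : -αt * (-Δ xt (αt • (w - xt)) / αt) = Δ xt (αt • (w - xt)) := by
    field_simp
  nlinarith [habs.2]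
end

section
/- Let E be a real normed vector space, C ⊆ E a nonempty compact convex set, f : E → ℝ convex on C, Δ : E → E → ℝ, and C_f ≥ 0 a constant such that Δ satisfies the curvature bound C_f for f on C. Let x* ∈ C be a minimizer of f over C, let ε ≥ 0, and consider the agnostic schedule α_t = 2/(t+2). Let x, v : ℕ → E satisfy: x_0 ∈ C; for every t, v_t ∈ C is an ε-approximate model minimizer at x_t with step-size α_t; and x_{t+1} = (1 − α_t)·x_t + α_t·v_t. Then for every t ∈ ℕ, f(x_{t+1}) − f(x*) ≤ 4·C_f·(1 + ε)/(t + 2). -/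
/-- Primal-dual convergence for relaxed vanilla ASFW: with the agnostic schedule
`α t = 2 / (t + 2)` and `ε`-approximate model minimizers, the iterates satisfy
`f (x (t+1)) - f xs ≤ 4 * Cf * (1 + ε) / (t + 2)`. -/
theorem relaxed_asfw_primal_dual_convergence
    {E : Type*} [NormedAddCommGroup E] [NormedSpace ℝ E]
    (C : Set E) (hCne : C.Nonempty) (hCcomp : IsCompact C) (hCconv : Convex ℝ C)
    (f : E → ℝ) (hf : ConvexOn ℝ C f)
    (Δ : E → E → ℝ) (Cf : ℝ) (hCf : 0 ≤ Cf)
    (hcurv : ∀ x ∈ C, ∀ v ∈ C, ∀ α ∈ Set.Ioc (0:ℝ) 1,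
      |f (x + α • (v - x)) - f x - Δ x (α • (v - x))| ≤ α ^ 2 / 2 * Cf)
    (xs : E) (hxs : xs ∈ C) (hmin : ∀ y ∈ C, f xs ≤ f y)
    (ε : ℝ) (hε : 0 ≤ ε)
    (α : ℕ → ℝ) (hα : ∀ t : ℕ, α t = 2 / ((t : ℝ) + 2))
    (x v : ℕ → E) (hx0 : x 0 ∈ C) (hv : ∀ t, v t ∈ C)
    (horacle : ∀ t : ℕ, ∀ w ∈ C,
      Δ (x t) (α t • (v t - x t)) ≤ Δ (x t) (α t • (w - x t)) + ε * (α t) ^ 2 / 2 * Cf)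
    (hstep : ∀ t : ℕ, x (t + 1) = (1 - α t) • x t + α t • v t) :
    ∀ t : ℕ, f (x (t + 1)) - f xs ≤ 4 * Cf * (1 + ε) / ((t : ℝ) + 2) := by

  have hα01 : ∀ t : ℕ, α t ∈ Set.Ioc (0:ℝ) 1 := by
    intro t
    rw [hα]
    have ht : (0:ℝ) < (t:ℝ) + 2 := by positivity
    constructor
    · positivity
    · rw [div_le_one ht]
      have := (Nat.cast_nonneg t : (0:ℝ) ≤ t)
      linarith
  have hxC : ∀ t, x t ∈ C := by
    intro t
    induction t with
    | zero => exact hx0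
    | succ n ih =>
      rw [hstep]
      have h1 := (hα01 n).1
      have h2 := (hα01 n).2
      exact hCconv ih (hv n) (by linarith) (le_of_lt h1) (by ring)
  have key : ∀ t : ℕ, f (x (t+1)) - f xs ≤
      (1 - α t) * (f (x t) - f xs) + (α t)^2 * ((2+ε)/2) * Cf := by
    intro t
    have haI := hα01 t
    have hx1 : x (t+1) = x t + α t • (v t - x t) := by
      rw [hstep]; module
    have h1 := abs_le.mp (hcurv (x t) (hxC t) (v t) (hv t) (α t) haI)
    have h2 := horacle t xs hxs
    have h3 := abs_le.mp (hcurv (x t) (hxC t) xs hxs (α t) haI)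
    have hconv : f (x t + α t • (xs - x t)) ≤ (1 - α t) * f (x t) + α t * f xs := by
      have h := hf.2 (hxC t) hxs (by linarith [haI.2] : (0:ℝ) ≤ 1 - α t)
        (le_of_lt haI.1) (by ring)
      have heq : (1 - α t) • x t + α t • xs = x t + α t • (xs - x t) := by module
      rw [heq] at h
      simpa [smul_eq_mul] using h
    rw [hx1]
    nlinarith [h1.1, h1.2, h3.1, h3.2, h2, hconv]
  intro t
  induction t with
  | zero =>
    have hk := key 0
    have hα0 : α 0 = 1 := by rw [hα]; norm_num
    rw [hα0] at hk
    norm_num at hk ⊢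
    nlinarith
  | succ n ih =>
    have hk := key (n+1)
    have hN : (0:ℝ) < (n:ℝ) + 2 := by positivity
    have hM : (0:ℝ) < (n:ℝ) + 3 := by positivity
    have hαn : α (n+1) = 2 / ((n:ℝ) + 3) := by rw [hα]; push_cast; ring_nf
    rw [hαn] at hk
    push_cast at hk ih ⊢
    have hα1 : 0 ≤ 1 - 2 / ((n:ℝ) + 3) := by
      rw [sub_nonneg, div_le_one hM]; linarith
    have step1 : (1 - 2 / ((n:ℝ)+3)) * (f (x (n+1)) - f xs)
        ≤ (1 - 2 / ((n:ℝ)+3)) * (4 * Cf * (1+ε) / ((n:ℝ)+2)) :=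
      mul_le_mul_of_nonneg_left ih hα1
    have hineq : (1 - 2 / ((n:ℝ)+3)) * (4 * Cf * (1+ε) / ((n:ℝ)+2))
        + (2 / ((n:ℝ)+3))^2 * ((2+ε)/2) * Cf ≤ 4 * Cf * (1+ε) / ((n:ℝ)+1+2) := by
      have hn0 : (0:ℝ) ≤ (n:ℝ) := Nat.cast_nonneg n
      have e1 : (1 - 2/((n:ℝ)+3)) = ((n:ℝ)+1)/((n:ℝ)+3) := by field_simp; ring
      rw [e1]
      have hM3 : ((n:ℝ)+3) ≠ 0 := by positivity
      have hN2 : ((n:ℝ)+2) ≠ 0 := by positivity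
      rw [div_mul_div_comm, div_pow, div_mul_eq_mul_div, div_mul_eq_mul_div,
        div_add_div _ _ (by positivity) (by positivity),
        div_le_div_iff₀ (by positivity) (by positivity)]
      ring_nf
      nlinarith [mul_nonneg hCf hε, mul_nonneg (mul_nonneg hCf hε) hn0,
        mul_nonneg (mul_nonneg (mul_nonneg hCf hε) hn0) hn0,
        mul_nonneg (mul_nonneg (mul_nonneg (mul_nonneg hCf hε) hn0) hn0) hn0,
        mul_nonneg hCf hn0, mul_nonneg (mul_nonneg hCf hn0) hn0, sq_nonneg ((n:ℝ))]
    linarith [hk, step1, hineq]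
end

section
/- Let E be a real normed vector space, C ⊆ E a nonempty compact convex set, f : E → ℝ convex on C, Δ : E → E → ℝ, and C_f ≥ 0 a constant such that Δ satisfies the curvature bound C_f for f on C. Let x* ∈ C be a minimizer of f over C, let ε ≥ 0, and consider the agnostic schedule a_t = 2(t+1), A_t = (t+1)(t+2), α_t = 2/(t+2). Let x, v : ℕ → E satisfy: x_0 ∈ C; for every t, v_t ∈ C satisfies the heavy ball oracle condition ∑_{i=0}^t a_i·Δ x_i (α_i·(v_t − x_i))/α_i ≤ ∑_{i=0}^t a_i·Δ x_i (α_i·(w − x_i))/α_i + ε·a_t·α_t·C_f for all w ∈ C; and x_{t+1} = (1 − α_t)·x_t + α_t·v_t. Then for every t ∈ ℕ, f(x_{t+1}) − f(x*) ≤ 4·C_f·(1 + ε)/(t + 2). -/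
/-! Since `α_t = a_t / A_t` with `A_t = ∑_{i ≤ t} a_i`, the oracle weights are `a_i / α_i = A_i`.
Multiplying the descent inequality `f(x_{t+1}) ≤ f(x_t) + Δ x_t (α_t (v_t - x_t)) + α_t² C_f / 2`
by `A_{t+1}` and testing the oracle condition for `v_t` at `v_{t+1}` shows by induction that
`A_t f(x_{t+1})` is at most `∑ a_i f(x_i)` plus the aggregated model evaluated at `v_t`, up to
`∑ a_i α_i C_f / 2` and the accumulated oracle errors. Testing the oracle at `x*` and bounding each
model term from above by convexity turns this into
`A_t (f(x_{t+1}) - f(x*)) ≤ (1 + ε) C_f ∑ a_i α_i`; for the agnostic schedule `a_i α_i ≤ 4` and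
`A_t = (t + 1)(t + 2)`. -/

open Finset

def CurvatureBound {E : Type*} [AddCommGroup E] [Module ℝ E] (C : Set E) (f : E → ℝ)
    (Δ : E → E → ℝ) (Cf : ℝ) : Prop :=
  ∀ x ∈ C, ∀ v ∈ C, ∀ α ∈ Set.Ioc (0 : ℝ) 1,
    |f (x + α • (v - x)) - f x - Δ x (α • (v - x))| ≤ α ^ 2 / 2 * Cf

namespace CurvatureBound

variable {E : Type*} [AddCommGroup E] [Module ℝ E] {C : Set E} {f : E → ℝ} {Δ : E → E → ℝ}
  {Cf α : ℝ} {x v : E}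

theorem le_add_model (h : CurvatureBound C f Δ Cf) (hx : x ∈ C) (hv : v ∈ C)
    (hα : α ∈ Set.Ioc 0 1) :
    f ((1 - α) • x + α • v) ≤ f x + Δ x (α • (v - x)) + α ^ 2 / 2 * Cf := by
  have hcurv := (abs_le.mp (h x hx v hv α hα)).2
  rw [show (1 - α) • x + α • v = x + α • (v - x) by module]
  linarith

theorem model_le (h : CurvatureBound C f Δ Cf) (hf : ConvexOn ℝ C f) (hx : x ∈ C) (hv : v ∈ C)
    (hα : α ∈ Set.Ioc 0 1) :
    Δ x (α • (v - x)) ≤ α * (f v - f x) + α ^ 2 / 2 * Cf := by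
  have hcurv := (abs_le.mp (h x hx v hv α hα)).1
  have hconv := hf.2 hx hv (sub_nonneg.2 hα.2) hα.1.le (sub_add_cancel 1 α)
  rw [show (1 - α) • x + α • v = x + α • (v - x) by module, smul_eq_mul, smul_eq_mul] at hconv
  linarith

theorem weighted_model_le (h : CurvatureBound C f Δ Cf) (hf : ConvexOn ℝ C f) (hx : x ∈ C)
    (hv : v ∈ C) (hα : α ∈ Set.Ioc 0 1) {a : ℝ} (ha : 0 ≤ a) :
    a * Δ x (α • (v - x)) / α ≤ a * (f v - f x) + a * α / 2 * Cf := by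
  have hα0 : α ≠ 0 := hα.1.ne'
  calc a * Δ x (α • (v - x)) / α = a / α * Δ x (α • (v - x)) := by ring
    _ ≤ a / α * (α * (f v - f x) + α ^ 2 / 2 * Cf) :=
      mul_le_mul_of_nonneg_left (h.model_le hf hx hv hα) (div_nonneg ha hα.1.le)
    _ = a * (f v - f x) + a * α / 2 * Cf := by field_simp

end CurvatureBound

theorem Convex.seq_mem_of_step {E : Type*} [AddCommGroup E] [Module ℝ E] {C : Set E}
    (hC : Convex ℝ C) {α : ℕ → ℝ} {x v : ℕ → E} (hα : ∀ t, α t ∈ Set.Icc 0 1) (hx0 : x 0 ∈ C)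
    (hv : ∀ t, v t ∈ C) (hstep : ∀ t, x (t + 1) = (1 - α t) • x t + α t • v t) (t : ℕ) :
    x t ∈ C := by
  induction t with
  | zero => exact hx0
  | succ t ih =>
    rw [hstep t]
    exact hC ih (hv t) (sub_nonneg.2 (hα t).2) (hα t).1 (sub_add_cancel 1 (α t))

section HeavyBall

variable {E : Type*} [AddCommGroup E] [Module ℝ E] {C : Set E} {f : E → ℝ} {Δ : E → E → ℝ}
  {Cf : ℝ} {a α δ : ℕ → ℝ} {x v : ℕ → E}

theorem heavyBall_potential_le (hcurv : CurvatureBound C f Δ Cf)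
    (hα : ∀ t, α t ∈ Set.Ioc 0 1) (ha : ∀ t, 0 ≤ a t)
    (hαa : ∀ t, α t * ∑ i ∈ range (t + 1), a i = a t) (hx : ∀ t, x t ∈ C) (hv : ∀ t, v t ∈ C)
    (horacle : ∀ t, ∀ w ∈ C,
      ∑ i ∈ range (t + 1), a i * Δ (x i) (α i • (v t - x i)) / α i ≤
        ∑ i ∈ range (t + 1), a i * Δ (x i) (α i • (w - x i)) / α i + δ t)
    (hstep : ∀ t, x (t + 1) = (1 - α t) • x t + α t • v t) (t : ℕ) :
    (∑ i ∈ range (t + 1), a i) * f (x (t + 1)) ≤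
      ∑ i ∈ range (t + 1), a i * f (x i) +
        ∑ i ∈ range (t + 1), a i * Δ (x i) (α i • (v t - x i)) / α i +
        (∑ i ∈ range (t + 1), a i * α i) / 2 * Cf + ∑ i ∈ range t, δ i := by
  have hdescent t : (∑ i ∈ range (t + 1), a i) * f (x (t + 1)) ≤
      (∑ i ∈ range (t + 1), a i) * (f (x t) + Δ (x t) (α t • (v t - x t)) + α t ^ 2 / 2 * Cf) := by
    rw [hstep]
    exact mul_le_mul_of_nonneg_left (hcurv.le_add_model (hx t) (hv t) (hα t))
      (sum_nonneg fun i _ => ha i)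
  have hweight t d : a t * d / α t = (∑ i ∈ range (t + 1), a i) * d := by
    rw [← hαa t]; field_simp [(hα t).1.ne']
  have hweight_sq t : a t * α t = (∑ i ∈ range (t + 1), a i) * α t ^ 2 := by
    rw [← hαa t]; ring
  induction t with
  | zero =>
    have hd := hdescent 0
    simp only [zero_add, sum_range_one, sum_range_zero, hweight 0, hweight_sq 0] at hd ⊢
    linarith
  | succ t ih =>
    have hor := horacle t (v (t + 1)) (hv (t + 1))
    have hd := hdescent (t + 1)
    rw [sum_range_succ a (t + 1)] at hd ⊢
    rw [sum_range_succ (fun i => a i * f (x i)), sum_range_succ (fun i => a i * α i),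
      sum_range_succ (fun i => a i * Δ (x i) (α i • (v (t + 1) - x i)) / α i),
      sum_range_succ δ, hweight, hweight_sq, sum_range_succ a (t + 1)]
    linarith

theorem heavyBall_model_sum_le (hcurv : CurvatureBound C f Δ Cf) (hf : ConvexOn ℝ C f)
    (hα : ∀ t, α t ∈ Set.Ioc 0 1) (ha : ∀ t, 0 ≤ a t) (hx : ∀ t, x t ∈ C) {w : E} (hw : w ∈ C)
    (s : Finset ℕ) :
    ∑ i ∈ s, a i * Δ (x i) (α i • (w - x i)) / α i ≤
      (∑ i ∈ s, a i) * f w - ∑ i ∈ s, a i * f (x i) + (∑ i ∈ s, a i * α i) / 2 * Cf := by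
  calc ∑ i ∈ s, a i * Δ (x i) (α i • (w - x i)) / α i
      ≤ ∑ i ∈ s, (a i * (f w - f (x i)) + a i * α i / 2 * Cf) :=
        sum_le_sum fun i _ => hcurv.weighted_model_le hf (hx i) hw (hα i) (ha i)
    _ = (∑ i ∈ s, a i) * f w - ∑ i ∈ s, a i * f (x i) + (∑ i ∈ s, a i * α i) / 2 * Cf := by
        simp only [sum_add_distrib, mul_sub, sum_sub_distrib, sum_mul, sum_div]

theorem heavyBall_sub_le (hcurv : CurvatureBound C f Δ Cf) (hf : ConvexOn ℝ C f)
    (hα : ∀ t, α t ∈ Set.Ioc 0 1) (ha : ∀ t, 0 ≤ a t)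
    (hαa : ∀ t, α t * ∑ i ∈ range (t + 1), a i = a t) (hx : ∀ t, x t ∈ C) (hv : ∀ t, v t ∈ C)
    (horacle : ∀ t, ∀ w ∈ C,
      ∑ i ∈ range (t + 1), a i * Δ (x i) (α i • (v t - x i)) / α i ≤
        ∑ i ∈ range (t + 1), a i * Δ (x i) (α i • (w - x i)) / α i + δ t)
    (hstep : ∀ t, x (t + 1) = (1 - α t) • x t + α t • v t) {w : E} (hw : w ∈ C) (t : ℕ) :
    (∑ i ∈ range (t + 1), a i) * (f (x (t + 1)) - f w) ≤
      (∑ i ∈ range (t + 1), a i * α i) * Cf + ∑ i ∈ range (t + 1), δ i := by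
  have hpot := heavyBall_potential_le hcurv hα ha hαa hx hv horacle hstep t
  have hmodel := heavyBall_model_sum_le hcurv hf hα ha hx hw (range (t + 1))
  rw [sum_range_succ δ]
  linarith [horacle t w hw]

end HeavyBall

section Agnostic

variable {a α : ℕ → ℝ}

theorem agnostic_stepSize_mem (hα : ∀ t : ℕ, α t = 2 / ((t : ℝ) + 2)) (t : ℕ) :
    α t ∈ Set.Ioc 0 1 := by
  rw [hα, Set.mem_Ioc, div_le_one (by positivity)]
  exact ⟨by positivity, by linarith [t.cast_nonneg (α := ℝ)]⟩

theorem agnostic_sum_weights (ha : ∀ t : ℕ, a t = 2 * ((t : ℝ) + 1)) (t : ℕ) :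
    ∑ i ∈ range (t + 1), a i = ((t : ℝ) + 1) * ((t : ℝ) + 2) := by
  induction t with
  | zero => simp [ha]
  | succ t ih =>
    rw [sum_range_succ, ih, ha]
    push_cast
    ring

theorem agnostic_stepSize_mul_sum_weights (ha : ∀ t : ℕ, a t = 2 * ((t : ℝ) + 1))
    (hα : ∀ t : ℕ, α t = 2 / ((t : ℝ) + 2)) (t : ℕ) :
    α t * ∑ i ∈ range (t + 1), a i = a t := by
  rw [agnostic_sum_weights ha, hα, ha]
  field_simp

theorem agnostic_sum_weight_mul_stepSize_le (ha : ∀ t : ℕ, a t = 2 * ((t : ℝ) + 1))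
    (hα : ∀ t : ℕ, α t = 2 / ((t : ℝ) + 2)) (t : ℕ) :
    ∑ i ∈ range (t + 1), a i * α i ≤ 4 * ((t : ℝ) + 1) := by
  calc ∑ i ∈ range (t + 1), a i * α i ≤ ∑ _i ∈ range (t + 1), (4 : ℝ) := by
        refine sum_le_sum fun i _ => ?_
        rw [ha, hα, mul_div_assoc', div_le_iff₀ (by positivity)]
        linarith
    _ = 4 * ((t : ℝ) + 1) := by simp [mul_comm]

end Agnostic

theorem heavy_ball_asfw_primal_dual_convergence_general
    {E : Type*} [NormedAddCommGroup E] [NormedSpace ℝ E]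
    (C : Set E) (hCconv : Convex ℝ C)
    (f : E → ℝ) (hf : ConvexOn ℝ C f)
    (Δ : E → E → ℝ) (Cf : ℝ) (hCf : 0 ≤ Cf)
    (hcurv : ∀ x ∈ C, ∀ v ∈ C, ∀ α ∈ Set.Ioc (0:ℝ) 1,
      |f (x + α • (v - x)) - f x - Δ x (α • (v - x))| ≤ α ^ 2 / 2 * Cf)
    (xs : E) (hxs : xs ∈ C)
    (ε : ℝ) (hε : 0 ≤ ε)
    (a α : ℕ → ℝ)
    (ha : ∀ t : ℕ, a t = 2 * ((t : ℝ) + 1))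
    (hα : ∀ t : ℕ, α t = 2 / ((t : ℝ) + 2))
    (x v : ℕ → E) (hx0 : x 0 ∈ C) (hv : ∀ t, v t ∈ C)
    (horacle : ∀ t : ℕ, ∀ w ∈ C,
      ∑ i ∈ Finset.range (t + 1), a i * Δ (x i) (α i • (v t - x i)) / α i ≤
        (∑ i ∈ Finset.range (t + 1), a i * Δ (x i) (α i • (w - x i)) / α i) +
          ε * a t * α t * Cf)
    (hstep : ∀ t : ℕ, x (t + 1) = (1 - α t) • x t + α t • v t) :
    ∀ t : ℕ, f (x (t + 1)) - f xs ≤ 4 * Cf * (1 + ε) / ((t : ℝ) + 2) := by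
  intro t
  have hα_mem := agnostic_stepSize_mem hα
  have ha_nonneg t : 0 ≤ a t := by rw [ha]; positivity
  have hx := hCconv.seq_mem_of_step (fun t => Set.Ioc_subset_Icc_self (hα_mem t)) hx0 hv hstep
  have hgap := heavyBall_sub_le hcurv hf hα_mem ha_nonneg
    (agnostic_stepSize_mul_sum_weights ha hα) hx hv horacle hstep hxs t
  have herror : ∑ i ∈ range (t + 1), ε * a i * α i * Cf =
      ε * Cf * ∑ i ∈ range (t + 1), a i * α i := by
    rw [mul_sum]; exact sum_congr rfl fun i _ => by ring
  have hQ := mul_le_mul_of_nonneg_left (agnostic_sum_weight_mul_stepSize_le ha hα t)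
    (by positivity : 0 ≤ (1 + ε) * Cf)
  rw [agnostic_sum_weights ha, herror] at hgap
  rw [le_div_iff₀ (by positivity)]
  refine le_of_mul_le_mul_left (a := (t : ℝ) + 1) ?_ (by positivity)
  linarith

/-- Primal-dual convergence for heavy ball ASFW: with the agnostic schedule
`a t = 2(t+1)`, `A t = (t+1)(t+2)`, `α t = 2/(t+2)`, and the inexact heavy ball
oracle, the iterates satisfy `f (x (t+1)) - f xs ≤ 4 * Cf * (1 + ε) / (t + 2)`. -/
theorem heavy_ball_asfw_primal_dual_convergence
    {E : Type*} [NormedAddCommGroup E] [NormedSpace ℝ E]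
    (C : Set E) (hCne : C.Nonempty) (hCcomp : IsCompact C) (hCconv : Convex ℝ C)
    (f : E → ℝ) (hf : ConvexOn ℝ C f)
    (Δ : E → E → ℝ) (Cf : ℝ) (hCf : 0 ≤ Cf)
    (hcurv : ∀ x ∈ C, ∀ v ∈ C, ∀ α ∈ Set.Ioc (0:ℝ) 1,
      |f (x + α • (v - x)) - f x - Δ x (α • (v - x))| ≤ α ^ 2 / 2 * Cf)
    (xs : E) (hxs : xs ∈ C) (hmin : ∀ y ∈ C, f xs ≤ f y)
    (ε : ℝ) (hε : 0 ≤ ε)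
    (a α : ℕ → ℝ)
    (ha : ∀ t : ℕ, a t = 2 * ((t : ℝ) + 1))
    (hα : ∀ t : ℕ, α t = 2 / ((t : ℝ) + 2))
    (x v : ℕ → E) (hx0 : x 0 ∈ C) (hv : ∀ t, v t ∈ C)
    (horacle : ∀ t : ℕ, ∀ w ∈ C,
      ∑ i ∈ Finset.range (t + 1), a i * Δ (x i) (α i • (v t - x i)) / α i ≤
        (∑ i ∈ Finset.range (t + 1), a i * Δ (x i) (α i • (w - x i)) / α i) +
          ε * a t * α t * Cf)
    (hstep : ∀ t : ℕ, x (t + 1) = (1 - α t) • x t + α t • v t) :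
    ∀ t : ℕ, f (x (t + 1)) - f xs ≤ 4 * Cf * (1 + ε) / ((t : ℝ) + 2) :=
  heavy_ball_asfw_primal_dual_convergence_general C hCconv f hf Δ Cf hCf hcurv xs hxs ε hε a α ha hα
    x v hx0 hv horacle hstep
end

section
/- Let E be a real normed vector space, C ⊆ E a nonempty compact convex set, f : E → ℝ convex on C, Δ : E → E → ℝ, C_f ≥ 0 such that Δ satisfies the curvature bound C_f for f on C, and ε ≥ 0. Let x* ∈ C be a minimizer of f over C. Let a : ℕ → ℝ with a_t > 0 for all t, A_t = ∑_{i=0}^t a_i, and α_t = a_t/A_t. Let x, v : ℕ → E with x_t ∈ C for all t, and suppose that for every i, v_i ∈ C is an ε-approximate model minimizer at x_i with step-size α_i. Then for every t, the lower bound estimate L_t = (1/A_t)·∑_{i=0}^t a_i·[ f(x_i) + Δ x_i (α_i·(v_i − x_i))/α_i − (α_i/2)·C_f·(1+ε) ] satisfies L_t ≤ f(x*). -/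
/-- Lower-bound validity for relaxed vanilla ASFW: for convex `f` with minimizer `xs`
and `ε`-approximate model minimizers `v i`, the ADGT lower-bound estimate
`L t = (1/A t) * ∑_{i=0}^t a i * (f (x i) + Δ (x i) (α i • (v i - x i)) / α i
- (α i / 2) * Cf * (1+ε))` satisfies `L t ≤ f xs`. -/
theorem adgt_lower_bound_vanilla
    {E : Type*} [NormedAddCommGroup E] [NormedSpace ℝ E]
    (C : Set E) (hCne : C.Nonempty) (hCcomp : IsCompact C) (hCconv : Convex ℝ C)
    (f : E → ℝ) (hf : ConvexOn ℝ C f)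
    (Δ : E → E → ℝ) (Cf : ℝ) (hCf : 0 ≤ Cf)
    (hcurv : ∀ x ∈ C, ∀ v ∈ C, ∀ α ∈ Set.Ioc (0:ℝ) 1,
      |f (x + α • (v - x)) - f x - Δ x (α • (v - x))| ≤ α ^ 2 / 2 * Cf)
    (xs : E) (hxs : xs ∈ C) (hmin : ∀ y ∈ C, f xs ≤ f y)
    (ε : ℝ) (hε : 0 ≤ ε)
    (a A α : ℕ → ℝ) (ha : ∀ t, 0 < a t)
    (hA : ∀ t : ℕ, A t = ∑ i ∈ Finset.range (t + 1), a i)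
    (hα : ∀ t : ℕ, α t = a t / A t)
    (x v : ℕ → E) (hx : ∀ t, x t ∈ C) (hv : ∀ t, v t ∈ C)
    (horacle : ∀ i : ℕ, ∀ w ∈ C,
      Δ (x i) (α i • (v i - x i)) ≤ Δ (x i) (α i • (w - x i)) + ε * (α i) ^ 2 / 2 * Cf) :
    ∀ t : ℕ, (1 / A t) * (∑ i ∈ Finset.range (t + 1),
      a i * (f (x i) + Δ (x i) (α i • (v i - x i)) / α i - α i / 2 * Cf * (1 + ε)))
      ≤ f xs := by
  have hApos : ∀ t, 0 < A t := by
    intro t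
    rw [hA]
    exact Finset.sum_pos (fun i _ => ha i) ⟨0, Finset.mem_range.mpr (Nat.succ_pos t)⟩
  have hαIoc : ∀ t, α t ∈ Set.Ioc (0:ℝ) 1 := by
    intro t
    rw [hα]
    constructor
    · exact div_pos (ha t) (hApos t)
    · rw [div_le_one (hApos t), hA]
      exact Finset.single_le_sum (f := a) (fun i _ => (ha i).le)
        (Finset.mem_range.mpr (Nat.lt_succ_self t))
  -- pointwise bound
  have key : ∀ i : ℕ,
      f (x i) + Δ (x i) (α i • (v i - x i)) / α i - α i / 2 * Cf * (1 + ε) ≤ f xs := by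
    intro i
    have hαpos : 0 < α i := (hαIoc i).1
    have h1 := horacle i xs hxs
    have h2 := hcurv (x i) (hx i) xs hxs (α i) (hαIoc i)
    have h3 : Δ (x i) (α i • (xs - x i)) ≤
        f (x i + α i • (xs - x i)) - f (x i) + α i ^ 2 / 2 * Cf := by
      have := abs_le.mp h2
      linarith [this.1]
    have hconv : f (x i + α i • (xs - x i)) ≤ (1 - α i) * f (x i) + α i * f xs := by
      have := hf.2 (hx i) hxs (show (0:ℝ) ≤ 1 - α i by linarith [(hαIoc i).2])
        hαpos.le (by ring)
      have heq : (1 - α i) • x i + α i • xs = x i + α i • (xs - x i) := by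
        simp [smul_sub, sub_smul]
        abel
      rw [heq] at this
      simpa using this
    have hΔ : Δ (x i) (α i • (v i - x i)) ≤
        -(α i) * f (x i) + α i * f xs + α i ^ 2 / 2 * Cf * (1 + ε) := by
      nlinarith
    have h4 : Δ (x i) (α i • (v i - x i)) / α i ≤
        -f (x i) + f xs + α i / 2 * Cf * (1 + ε) := by
      rw [div_le_iff₀ hαpos]
      nlinarith
    linarith
  intro t
  have hsum : (∑ i ∈ Finset.range (t + 1),
      a i * (f (x i) + Δ (x i) (α i • (v i - x i)) / α i - α i / 2 * Cf * (1 + ε)))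
      ≤ A t * f xs := by
    rw [hA, Finset.sum_mul]
    exact Finset.sum_le_sum fun i _ =>
      mul_le_mul_of_nonneg_left (key i) (ha i).le
  have hApos' := hApos t
  calc (1 / A t) * _ ≤ (1 / A t) * (A t * f xs) := by
        apply mul_le_mul_of_nonneg_left hsum (by positivity)
      _ = f xs := by field_simp
end

section
/- Let E be a real normed vector space, C ⊆ E a nonempty compact convex set, f : E → ℝ, Δ : E → E → ℝ, C_f ≥ 0 such that Δ satisfies the curvature bound C_f for f on C, and ε ≥ 0. Let a : ℕ → ℝ with a_t > 0 for all t, A_t = ∑_{i=0}^t a_i, α_t = a_t/A_t, and η_t = ε·(a_t²/A_t)·C_f. Let x, v : ℕ → E with x_0 ∈ C, v_t ∈ C, x_{t+1} = (1 − α_t)·x_t + α_t·v_t, and suppose that for every t, v_t is an η_t-approximate minimizer of the aggregated model Φ_t(v) = ∑_{i=0}^t a_i·Δ x_i (α_i·(v − x_i))/α_i over C, i.e. Φ_t(v_t) ≤ Φ_t(w) + η_t for all w ∈ C. Define L_t = (1/A_t)·( ∑_{i=0}^t a_i·[ f(x_i) + Δ x_i (α_i·(v_t − x_i))/α_i − (α_i/2)·C_f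 ] − η_t ) and G_t = f(x_{t+1}) − L_t. Then A_0·G_0 ≤ (a_0²/A_0)·C_f·(1+ε), and for all t ≥ 1, A_t·G_t − A_{t−1}·G_{t−1} ≤ (a_t²/A_t)·C_f + η_t ≤ (a_t²/A_t)·C_f·(1+ε). -/
/-!
Write `S_t(w) = ∑_{i ≤ t} a_i (f(x_i) + Δ_{x_i}(α_i (w - x_i))/α_i - (α_i/2) C_f)`, so that
`A_t G_t = A_t f(x_{t+1}) - S_t(v_t) + η_t`. Only the model part of `S_t` depends on `w`, so the
oracle property of `v_{t-1}` gives `S_{t-1}(v_{t-1}) ≤ S_{t-1}(v_t) + η_{t-1}`, and `S_t(v_t)` is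
`S_{t-1}(v_t)` plus its last summand. What remains of `A_t G_t - A_{t-1} G_{t-1}` is
`A_t (f(x_{t+1}) - f(x_t) - Δ_{x_t}(α_t (v_t - x_t))) + (a_t²/(2A_t)) C_f + η_t`, and the curvature
bound with `A_t α_t² = a_t²/A_t` bounds the first term by `(a_t²/(2A_t)) C_f`. The case `t = 0`
is the same computation with `A_{-1} = 0`.
-/

open Finset

lemma div_sum_range_succ_mem_Ioc {a : ℕ → ℝ} (ha : ∀ i, 0 < a i) (t : ℕ) :
    a t / ∑ i ∈ range (t + 1), a i ∈ Set.Ioc 0 1 :=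
  ⟨div_pos (ha t) (sum_pos (fun i _ => ha i) nonempty_range_add_one),
    div_le_one_of_le₀ (single_le_sum (fun i _ => (ha i).le) (self_mem_range_succ t))
      (sum_nonneg fun i _ => (ha i).le)⟩

lemma Convex.mem_of_recursive_combo {E : Type*} [AddCommGroup E] [Module ℝ E] {C : Set E}
    (hC : Convex ℝ C) {x v : ℕ → E} {α : ℕ → ℝ} (hx0 : x 0 ∈ C) (hv : ∀ t, v t ∈ C)
    (hα : ∀ t, α t ∈ Set.Icc 0 1) (hstep : ∀ t, x (t + 1) = (1 - α t) • x t + α t • v t) :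
    ∀ t, x t ∈ C
  | 0 => hx0
  | t + 1 => hstep t ▸ hC (hC.mem_of_recursive_combo hx0 hv hα hstep t) (hv t)
      (sub_nonneg.mpr (hα t).2) (hα t).1 (sub_add_cancel 1 (α t))

/-- One step of the estimate sequence in scalar form: `A' = A + a` are consecutive partial sums of
the weights, `fx, fx'` consecutive values of `f` and `D` the model increment of the step. -/
lemma weighted_step_le {A A' a α fx fx' D Cf : ℝ} (ha : 0 < a) (hA'pos : 0 < A')
    (hA' : A' = A + a) (hα : α = a / A') (hcurv : fx' - fx - D ≤ α ^ 2 / 2 * Cf) :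
    A' * fx' - A * fx - a * (fx + D / α - α / 2 * Cf) ≤ a ^ 2 / A' * Cf := by
  have hsplit : A' * fx' - A * fx - a * (fx + D / α - α / 2 * Cf) =
      A' * (fx' - fx - D) + a ^ 2 / A' * Cf / 2 := by
    subst hα hA'
    field_simp
    ring
  have hdescent : A' * (fx' - fx - D) ≤ a ^ 2 / A' * Cf / 2 :=
    calc A' * (fx' - fx - D) ≤ A' * (α ^ 2 / 2 * Cf) := mul_le_mul_of_nonneg_left hcurv hA'pos.le
      _ = a ^ 2 / A' * Cf / 2 := by subst hα; field_simp
  linarith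

section EstimateSequence

variable {E : Type*} [AddCommGroup E] [Module ℝ E]
  (f : E → ℝ) (Δ : E → E → ℝ) (Cf : ℝ) (a α : ℕ → ℝ) (x : ℕ → E)

/-- The aggregated model `Φ_t(w)`. -/
noncomputable def aggregatedModel (t : ℕ) (w : E) : ℝ :=
  ∑ i ∈ range (t + 1), a i * Δ (x i) (α i • (w - x i)) / α i

/-- `S_t(w)`; at `w = v_t` it is `A_t L_t + η_t`. -/
noncomputable def lowerBoundSum (t : ℕ) (w : E) : ℝ :=
  ∑ i ∈ range (t + 1), a i * (f (x i) + Δ (x i) (α i • (w - x i)) / α i - α i / 2 * Cf)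

variable {f Δ Cf a α x}

lemma lowerBoundSum_eq_add_aggregatedModel (t : ℕ) (w : E) :
    lowerBoundSum f Δ Cf a α x t w =
      (∑ i ∈ range (t + 1), a i * (f (x i) - α i / 2 * Cf)) + aggregatedModel Δ a α x t w := by
  rw [aggregatedModel, lowerBoundSum, ← sum_add_distrib]
  exact sum_congr rfl fun i _ => by ring

lemma lowerBoundSum_le_of_aggregatedModel_le {t : ℕ} {w w' : E} {η : ℝ}
    (h : aggregatedModel Δ a α x t w ≤ aggregatedModel Δ a α x t w' + η) :
    lowerBoundSum f Δ Cf a α x t w ≤ lowerBoundSum f Δ Cf a α x t w' + η := by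
  rw [lowerBoundSum_eq_add_aggregatedModel, lowerBoundSum_eq_add_aggregatedModel]
  linarith

lemma lowerBoundSum_succ (t : ℕ) (w : E) :
    lowerBoundSum f Δ Cf a α x (t + 1) w = lowerBoundSum f Δ Cf a α x t w +
      a (t + 1) * (f (x (t + 1)) + Δ (x (t + 1)) (α (t + 1) • (w - x (t + 1))) / α (t + 1) -
        α (t + 1) / 2 * Cf) :=
  sum_range_succ _ _

end EstimateSequence

theorem adgt_one_step_heavy_ball_general
    {E : Type*} [NormedAddCommGroup E] [NormedSpace ℝ E]
    (C : Set E) (hCconv : Convex ℝ C)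
    (f : E → ℝ)
    (Δ : E → E → ℝ) (Cf : ℝ)
    (hcurv : ∀ x ∈ C, ∀ v ∈ C, ∀ α ∈ Set.Ioc (0:ℝ) 1,
      |f (x + α • (v - x)) - f x - Δ x (α • (v - x))| ≤ α ^ 2 / 2 * Cf)
    (ε : ℝ)
    (a A α η : ℕ → ℝ) (ha : ∀ t, 0 < a t)
    (hA : ∀ t : ℕ, A t = ∑ i ∈ Finset.range (t + 1), a i)
    (hα : ∀ t : ℕ, α t = a t / A t)
    (hη : ∀ t : ℕ, η t = ε * (a t ^ 2 / A t) * Cf)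
    (x v : ℕ → E) (hx0 : x 0 ∈ C) (hv : ∀ t, v t ∈ C)
    (hstep : ∀ t : ℕ, x (t + 1) = (1 - α t) • x t + α t • v t)
    (horacle : ∀ t : ℕ, ∀ w ∈ C,
      ∑ i ∈ Finset.range (t + 1), a i * Δ (x i) (α i • (v t - x i)) / α i ≤
        (∑ i ∈ Finset.range (t + 1), a i * Δ (x i) (α i • (w - x i)) / α i) + η t)
    (L G : ℕ → ℝ)
    (hL : ∀ t : ℕ, L t = (1 / A t) * ((∑ i ∈ Finset.range (t + 1),
      a i * (f (x i) + Δ (x i) (α i • (v t - x i)) / α i - α i / 2 * Cf)) - η t))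
    (hG : ∀ t : ℕ, G t = f (x (t + 1)) - L t) :
    A 0 * G 0 ≤ a 0 ^ 2 / A 0 * Cf * (1 + ε) ∧
      ∀ t : ℕ, 1 ≤ t →
        A t * G t - A (t - 1) * G (t - 1) ≤ a t ^ 2 / A t * Cf + η t ∧
          a t ^ 2 / A t * Cf + η t ≤ a t ^ 2 / A t * Cf * (1 + ε) := by
  have hApos t : 0 < A t := hA t ▸ sum_pos (fun i _ => ha i) nonempty_range_add_one
  have hαmem t : α t ∈ Set.Ioc 0 1 := hα t ▸ hA t ▸ div_sum_range_succ_mem_Ioc ha t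
  have hxC :=
    hCconv.mem_of_recursive_combo hx0 hv (fun t => Set.Ioc_subset_Icc_self (hαmem t)) hstep
  have hdescent t : f (x (t + 1)) - f (x t) - Δ (x t) (α t • (v t - x t)) ≤ α t ^ 2 / 2 * Cf := by
    have h := hcurv _ (hxC t) _ (hv t) _ (hαmem t)
    rw [show x t + α t • (v t - x t) = x (t + 1) by rw [hstep]; module] at h
    exact (abs_le.mp h).2
  have hAG t : A t * G t = A t * f (x (t + 1)) - lowerBoundSum f Δ Cf a α x t (v t) + η t := by
    rw [hG, hL, mul_sub, ← mul_assoc, mul_one_div_cancel (hApos t).ne', one_mul, lowerBoundSum]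
    ring
  refine ⟨?_, fun t ht => ⟨?_, le_of_eq (by rw [hη]; ring)⟩⟩
  · have hstep_le := weighted_step_le (A := 0) (ha 0) (hApos 0) (by simp [hA]) (hα 0) (hdescent 0)
    rw [hAG, lowerBoundSum, sum_range_one, hη]
    linarith
  · obtain ⟨s, rfl⟩ := Nat.exists_eq_add_of_le' ht
    have hstep_le := weighted_step_le (A := A s) (ha (s + 1)) (hApos (s + 1))
      (by rw [hA, hA, sum_range_succ]) (hα (s + 1)) (hdescent (s + 1))
    have horacle_le := lowerBoundSum_le_of_aggregatedModel_le (f := f) (Cf := Cf)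
      (horacle s (v (s + 1)) (hv (s + 1)))
    rw [Nat.add_sub_cancel, hAG, hAG, lowerBoundSum_succ]
    linarith

/-- ADGT one-step inequality for heavy ball ASFW: with weights `a t > 0`,
`A t = ∑_{i=0}^t a i`, `α t = a t / A t`, tolerances `η t = ε * (a t² / A t) * Cf`,
aggregated model oracle condition for `v t`, lower bound estimate `L` and gap
`G t = f (x (t+1)) - L t`, one has `A 0 * G 0 ≤ (a 0² / A 0) * Cf * (1+ε)` and,
for `t ≥ 1`, `A t * G t - A (t-1) * G (t-1) ≤ (a t² / A t) * Cf + η t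
≤ (a t² / A t) * Cf * (1+ε)`. -/
theorem adgt_one_step_heavy_ball
    {E : Type*} [NormedAddCommGroup E] [NormedSpace ℝ E]
    (C : Set E) (hCne : C.Nonempty) (hCcomp : IsCompact C) (hCconv : Convex ℝ C)
    (f : E → ℝ)
    (Δ : E → E → ℝ) (Cf : ℝ) (hCf : 0 ≤ Cf)
    (hcurv : ∀ x ∈ C, ∀ v ∈ C, ∀ α ∈ Set.Ioc (0:ℝ) 1,
      |f (x + α • (v - x)) - f x - Δ x (α • (v - x))| ≤ α ^ 2 / 2 * Cf)
    (ε : ℝ) (hε : 0 ≤ ε)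
    (a A α η : ℕ → ℝ) (ha : ∀ t, 0 < a t)
    (hA : ∀ t : ℕ, A t = ∑ i ∈ Finset.range (t + 1), a i)
    (hα : ∀ t : ℕ, α t = a t / A t)
    (hη : ∀ t : ℕ, η t = ε * (a t ^ 2 / A t) * Cf)
    (x v : ℕ → E) (hx0 : x 0 ∈ C) (hv : ∀ t, v t ∈ C)
    (hstep : ∀ t : ℕ, x (t + 1) = (1 - α t) • x t + α t • v t)
    (horacle : ∀ t : ℕ, ∀ w ∈ C,
      ∑ i ∈ Finset.range (t + 1), a i * Δ (x i) (α i • (v t - x i)) / α i ≤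
        (∑ i ∈ Finset.range (t + 1), a i * Δ (x i) (α i • (w - x i)) / α i) + η t)
    (L G : ℕ → ℝ)
    (hL : ∀ t : ℕ, L t = (1 / A t) * ((∑ i ∈ Finset.range (t + 1),
      a i * (f (x i) + Δ (x i) (α i • (v t - x i)) / α i - α i / 2 * Cf)) - η t))
    (hG : ∀ t : ℕ, G t = f (x (t + 1)) - L t) :
    A 0 * G 0 ≤ a 0 ^ 2 / A 0 * Cf * (1 + ε) ∧
      ∀ t : ℕ, 1 ≤ t →
        A t * G t - A (t - 1) * G (t - 1) ≤ a t ^ 2 / A t * Cf + η t ∧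
          a t ^ 2 / A t * Cf + η t ≤ a t ^ 2 / A t * Cf * (1 + ε) :=
  adgt_one_step_heavy_ball_general C hCconv f Δ Cf hcurv ε a A α η ha hA hα hη x v hx0 hv hstep
    horacle L G hL hG
end

section
/- Let E be a real normed vector space, C ⊆ E a nonempty compact convex set, f : E → ℝ convex on C, Δ : E → E → ℝ, C_f ≥ 0 such that Δ satisfies the curvature bound C_f for f on C, and ε ≥ 0. Let x* ∈ C be a minimizer of f over C. Let a : ℕ → ℝ with a_t > 0 for all t, A_t = ∑_{i=0}^t a_i, α_t = a_t/A_t, and η_t = ε·(a_t²/A_t)·C_f. Let x : ℕ → E with x_t ∈ C for all t, and let v_t ∈ C satisfy the inexact aggregate oracle condition ∑_{i=0}^t a_i·Δ x_i (α_i·(v_t − x_i))/α_i ≤ ∑_{i=0}^t a_i·Δ x_i (α_i·(w − x_i))/α_i + η_t for all w ∈ C. Then the lower bound estimate L_t = (1/A_t)·( ∑_{i=0}^t a_i·[ f(x_i) + Δ x_i (α_i·(v_t − x_i))/α_i − (α_i/2)·C_f ] − η_t ) satisfies L_t ≤ f(x*). -/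
/-- Lower-bound validity for heavy ball ASFW: for convex `f` with minimizer `xs` and
`v t` satisfying the inexact aggregate oracle condition with tolerance
`η t = ε * (a t² / A t) * Cf`, the heavy ball lower-bound estimate
`L t = (1/A t) * (∑_{i=0}^t a i * (f (x i) + Δ (x i) (α i • (v t - x i)) / α i
- (α i / 2) * Cf) - η t)` satisfies `L t ≤ f xs`. -/
theorem adgt_lower_bound_heavy_ball
    {E : Type*} [NormedAddCommGroup E] [NormedSpace ℝ E]
    (C : Set E) (hCne : C.Nonempty) (hCcomp : IsCompact C) (hCconv : Convex ℝ C)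
    (f : E → ℝ) (hf : ConvexOn ℝ C f)
    (Δ : E → E → ℝ) (Cf : ℝ) (hCf : 0 ≤ Cf)
    (hcurv : ∀ x ∈ C, ∀ v ∈ C, ∀ α ∈ Set.Ioc (0:ℝ) 1,
      |f (x + α • (v - x)) - f x - Δ x (α • (v - x))| ≤ α ^ 2 / 2 * Cf)
    (xs : E) (hxs : xs ∈ C) (hmin : ∀ y ∈ C, f xs ≤ f y)
    (ε : ℝ) (hε : 0 ≤ ε)
    (a A α η : ℕ → ℝ) (ha : ∀ t, 0 < a t)
    (hA : ∀ t : ℕ, A t = ∑ i ∈ Finset.range (t + 1), a i)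
    (hα : ∀ t : ℕ, α t = a t / A t)
    (hη : ∀ t : ℕ, η t = ε * (a t ^ 2 / A t) * Cf)
    (x v : ℕ → E) (hx : ∀ t, x t ∈ C) (hv : ∀ t, v t ∈ C)
    (horacle : ∀ t : ℕ, ∀ w ∈ C,
      ∑ i ∈ Finset.range (t + 1), a i * Δ (x i) (α i • (v t - x i)) / α i ≤
        (∑ i ∈ Finset.range (t + 1), a i * Δ (x i) (α i • (w - x i)) / α i) + η t) :
    ∀ t : ℕ, (1 / A t) * ((∑ i ∈ Finset.range (t + 1),
      a i * (f (x i) + Δ (x i) (α i • (v t - x i)) / α i - α i / 2 * Cf)) - η t)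
      ≤ f xs := by

  have hApos : ∀ t : ℕ, 0 < A t := by
    intro t
    rw [hA t]
    exact Finset.sum_pos (fun i _ => ha i) (by simp)
  have hαpos : ∀ t : ℕ, 0 < α t := by
    intro t; rw [hα t]; exact div_pos (ha t) (hApos t)
  have hαle : ∀ t : ℕ, α t ≤ 1 := by
    intro t; rw [hα t]
    rw [div_le_one (hApos t), hA t]
    exact Finset.single_le_sum (f := a) (fun i _ => (ha i).le) (by simp)
  intro t
  -- per-term bound with w = xs
  have hterm : ∀ i : ℕ,
      a i * (f (x i) + Δ (x i) (α i • (xs - x i)) / α i - α i / 2 * Cf) ≤ a i * f xs := by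
    intro i
    have hc := hcurv (x i) (hx i) xs hxs (α i) ⟨hαpos i, hαle i⟩
    have hΔ : Δ (x i) (α i • (xs - x i)) ≤
        f (x i + α i • (xs - x i)) - f (x i) + α i ^ 2 / 2 * Cf := by
      have := (abs_le.mp hc).1; linarith
    have hcomb : f (x i + α i • (xs - x i)) ≤ (1 - α i) * f (x i) + α i * f xs := by
      have h := hf.2 (hx i) hxs (by linarith [hαle i] : (0:ℝ) ≤ 1 - α i)
        (hαpos i).le (by ring)
      have heq : (1 - α i) • x i + α i • xs = x i + α i • (xs - x i) := by
        simp [smul_sub, sub_smul, one_smul]; abel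
      rw [heq] at h
      simpa using h
    have hmain : f (x i) + Δ (x i) (α i • (xs - x i)) / α i - α i / 2 * Cf ≤ f xs := by
      have h3 : Δ (x i) (α i • (xs - x i)) / α i ≤ f xs - f (x i) + α i / 2 * Cf := by
        rw [div_le_iff₀ (hαpos i)]
        nlinarith [hαpos i]
      linarith
    exact mul_le_mul_of_nonneg_left hmain (ha i).le
  have hsum : ∑ i ∈ Finset.range (t + 1),
      a i * (f (x i) + Δ (x i) (α i • (xs - x i)) / α i - α i / 2 * Cf) ≤ A t * f xs := by
    rw [hA t, Finset.sum_mul]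
    exact Finset.sum_le_sum fun i _ => hterm i
  have hor := horacle t xs hxs
  have hnum : (∑ i ∈ Finset.range (t + 1),
      a i * (f (x i) + Δ (x i) (α i • (v t - x i)) / α i - α i / 2 * Cf)) - η t
      ≤ A t * f xs := by
    have hexp : ∀ (z : E), ∑ i ∈ Finset.range (t + 1),
        a i * (f (x i) + Δ (x i) (α i • (z - x i)) / α i - α i / 2 * Cf)
        = (∑ i ∈ Finset.range (t + 1), a i * (f (x i) - α i / 2 * Cf))
          + ∑ i ∈ Finset.range (t + 1), a i * Δ (x i) (α i • (z - x i)) / α i := by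
      intro z
      rw [← Finset.sum_add_distrib]
      exact Finset.sum_congr rfl fun i _ => by ring
    rw [hexp (v t)]
    have h2 := hsum
    rw [hexp xs] at h2
    linarith
  rw [one_div, inv_mul_le_iff₀ (hApos t)]
  linarith
end

section
/- Let E be a real normed vector space, C ⊆ E a nonempty compact convex set, f : E → ℝ, Δ : E → E → ℝ, C_f ≥ 0 such that Δ satisfies the curvature bound C_f for f on C, and ε ≥ 0. Assume that for every x ∈ C the piecewise linearization at x is convex on C. Let x* ∈ C be a minimizer of f over C. Let a : ℕ → ℝ with a_t > 0 for all t, A_t = ∑_{i=0}^t a_i, and α_t = a_t/A_t. Let x, v : ℕ → E with x_t ∈ C for all t, and suppose that for every i, v_i ∈ C is an ε-approximate model minimizer at x_i with step-size α_i. Then for every t, the lower bound estimate L_t = (1/A_t)·∑_{i=0}^t a_i·[ f(x_i) + Δ x_i (α_i·(v_i − x_i))/α_i − (1/2)·C_f − (α_i/2)·ε·C_f ] satisfies L_t ≤ f(x*). -/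
/-- Lower-bound validity for the piecewise linear model: if the piecewise
linearizations of `f` are convex on `C`, `xs` is a minimizer of `f` over `C`, and
the `v i` are `ε`-approximate model minimizers, then the lower-bound estimate
`L t = (1/A t) * ∑_{i=0}^t a i * (f (x i) + Δ (x i) (α i • (v i - x i)) / α i
- (1/2) * Cf - (α i / 2) * ε * Cf)` satisfies `L t ≤ f xs`. -/
theorem adgt_lower_bound_pw_linear
    {E : Type*} [NormedAddCommGroup E] [NormedSpace ℝ E]
    (C : Set E) (hCne : C.Nonempty) (hCcomp : IsCompact C) (hCconv : Convex ℝ C)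
    (f : E → ℝ)
    (Δ : E → E → ℝ) (Cf : ℝ) (hCf : 0 ≤ Cf)
    (hcurv : ∀ x ∈ C, ∀ v ∈ C, ∀ α ∈ Set.Ioc (0:ℝ) 1,
      |f (x + α • (v - x)) - f x - Δ x (α • (v - x))| ≤ α ^ 2 / 2 * Cf)
    (ε : ℝ) (hε : 0 ≤ ε)
    (hPLconv : ∀ x ∈ C, ConvexOn ℝ C (fun y => Δ x (y - x)) ∧ Δ x 0 = 0)
    (xs : E) (hxs : xs ∈ C) (hmin : ∀ y ∈ C, f xs ≤ f y)
    (a A α : ℕ → ℝ) (ha : ∀ t, 0 < a t)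
    (hA : ∀ t : ℕ, A t = ∑ i ∈ Finset.range (t + 1), a i)
    (hα : ∀ t : ℕ, α t = a t / A t)
    (x v : ℕ → E) (hx : ∀ t, x t ∈ C) (hv : ∀ t, v t ∈ C)
    (horacle : ∀ i : ℕ, ∀ w ∈ C,
      Δ (x i) (α i • (v i - x i)) ≤ Δ (x i) (α i • (w - x i)) + ε * (α i) ^ 2 / 2 * Cf) :
    ∀ t : ℕ, (1 / A t) * (∑ i ∈ Finset.range (t + 1),
      a i * (f (x i) + Δ (x i) (α i • (v i - x i)) / α i - 1 / 2 * Cf - α i / 2 * ε * Cf))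
      ≤ f xs := by

  have hApos : ∀ t, 0 < A t := fun t => by
    rw [hA]; exact Finset.sum_pos (fun i _ => ha i) ⟨0, Finset.mem_range.2 (Nat.succ_pos t)⟩
  have hαpos : ∀ t, 0 < α t := fun t => by
    rw [hα]; exact div_pos (ha t) (hApos t)
  have hαle1 : ∀ t, α t ≤ 1 := fun t => by
    rw [hα]
    apply div_le_one_of_le₀ _ (hApos t).le
    rw [hA]
    exact Finset.single_le_sum (fun i _ => (ha i).le) (Finset.self_mem_range_succ t)
  have key : ∀ i, f (x i) + Δ (x i) (α i • (v i - x i)) / α i - 1 / 2 * Cf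
      - α i / 2 * ε * Cf ≤ f xs := by
    intro i
    obtain ⟨hc, h0⟩ := hPLconv (x i) (hx i)
    have hconv : Δ (x i) (α i • (xs - x i)) ≤ α i * Δ (x i) (xs - x i) := by
      have h := hc.2 hxs (hx i) (hαpos i).le (by linarith [hαpos i, hαle1 i])
        (by ring : α i + (1 - α i) = 1)
      have harg : α i • xs + (1 - α i) • x i - x i = α i • (xs - x i) := by
        rw [smul_sub, sub_smul, one_smul]; abel
      simp only [harg, sub_self, h0, smul_eq_mul, mul_zero, add_zero] at h
      exact h
    have hcurv1 := hcurv (x i) (hx i) xs hxs 1 ⟨one_pos, le_refl 1⟩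
    rw [one_smul, add_sub_cancel] at hcurv1
    have h3 : Δ (x i) (xs - x i) ≤ f xs - f (x i) + 1 / 2 * Cf := by
      have := abs_le.1 hcurv1
      nlinarith [this.1, this.2]
    have h1 := horacle i xs hxs
    have hdiv : Δ (x i) (α i • (v i - x i)) / α i
        ≤ Δ (x i) (xs - x i) + ε * α i / 2 * Cf := by
      rw [div_le_iff₀ (hαpos i)]
      nlinarith [hαpos i]
    linarith
  intro t
  have hS : (∑ i ∈ Finset.range (t + 1),
      a i * (f (x i) + Δ (x i) (α i • (v i - x i)) / α i - 1 / 2 * Cf - α i / 2 * ε * Cf))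
      ≤ ∑ i ∈ Finset.range (t + 1), a i * f xs :=
    Finset.sum_le_sum (fun i _ => mul_le_mul_of_nonneg_left (key i) (ha i).le)
  have hsum : ∑ i ∈ Finset.range (t + 1), a i * f xs = A t * f xs := by
    rw [hA, Finset.sum_mul]
  calc (1 / A t) * _ ≤ (1 / A t) * (A t * f xs) := by
        rw [← hsum]
        exact mul_le_mul_of_nonneg_left hS (one_div_nonneg.2 (hApos t).le)
    _ = f xs := by
        rw [one_div, inv_mul_eq_div]
        exact mul_div_cancel_left₀ _ (hApos t).ne'
end
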